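/- arXiv:2112.09573 — 2 statements merged into one kernel-verified Lean document; each statement's English description precedes it below -/
import Mathlib

section
/- Let g be a labeled graph, g' = g ⋄ e a one-edge extension of g, and D a finite database of finite labeled graphs. If g and g' have equivalent occurrence in D, then the support of g in D equals the support of g' in D. -/
/-- A labeled graph: a finite simple graph with vertex and edge labels in `L`. -/
structure LabeledGraph (L : Type) : Type 1 where
  V : Type
  fintypeV : Fintype V
  graph : SimpleGraph V
  vlabel : V → L
  elabel : Sym2 V → L

/-- A subgraph isomorphism from `g` to `g'`: an injective vertex map preserving
vertex labels, mapping edges to edges, and preserving edge labels. -/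
structure SubgraphIso {L : Type} (g g' : LabeledGraph L) : Type where
  toFun : g.V → g'.V
  inj : Function.Injective toFun
  vlabel_eq : ∀ v, g'.vlabel (toFun v) = g.vlabel v
  map_adj : ∀ u v, g.graph.Adj u v → g'.graph.Adj (toFun u) (toFun v)
  elabel_eq : ∀ u v, g.graph.Adj u v → g'.elabel s(toFun u, toFun v) = g.elabel s(u, v)

/-- The identity subgraph isomorphism. -/
def SubgraphIso.refl {L : Type} (g : LabeledGraph L) : SubgraphIso g g where
  toFun := id
  inj := fun _ _ h => h
  vlabel_eq := fun _ => rfl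
  map_adj := fun _ _ h => h
  elabel_eq := fun _ _ _ => rfl

/-- Composition of subgraph isomorphisms. -/
def SubgraphIso.comp {L : Type} {g₁ g₂ g₃ : LabeledGraph L}
    (f : SubgraphIso g₁ g₂) (f' : SubgraphIso g₂ g₃) : SubgraphIso g₁ g₃ where
  toFun := f'.toFun ∘ f.toFun
  inj := f'.inj.comp f.inj
  vlabel_eq := fun v => by
    simp only [Function.comp_apply, f'.vlabel_eq, f.vlabel_eq]
  map_adj := fun u v h => f'.map_adj _ _ (f.map_adj u v h)
  elabel_eq := fun u v h => by
    simp only [Function.comp_apply]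
    rw [f'.elabel_eq _ _ (f.map_adj u v h), f.elabel_eq u v h]

/-- `g'` is a one-edge extension `g ⋄ e` of `g`: it comes with the inclusion
subgraph isomorphism `ρ : g → g'`, and `g'` consists of the image of `g`
plus exactly one new edge `e` (with at most one new endpoint vertex). -/
structure OneEdgeExtension {L : Type} (g g' : LabeledGraph L) : Type where
  ρ : SubgraphIso g g'
  e : Sym2 g'.V
  e_mem : e ∈ g'.graph.edgeSet
  e_new : ∀ u v, g.graph.Adj u v → s(ρ.toFun u, ρ.toFun v) ≠ e
  edge_cover : ∀ u' v', g'.graph.Adj u' v' →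
    s(u', v') = e ∨ ∃ u v, g.graph.Adj u v ∧ s(ρ.toFun u, ρ.toFun v) = s(u', v')
  vertex_cover : ∀ v' : g'.V, (∃ v, ρ.toFun v = v') ∨ v' ∈ e
  new_vertex_unique : ∀ v₁ v₂ : g'.V, v₁ ∈ e → v₂ ∈ e →
    (¬ ∃ v, ρ.toFun v = v₁) → (¬ ∃ v, ρ.toFun v = v₂) → v₁ = v₂

/-- The occurrence `I(g, D)`: the total number of subgraph isomorphisms of `g`
into the graphs of the database `D`. -/
noncomputable def occurrence {L : Type} (g : LabeledGraph L) (D : List (LabeledGraph L)) : ℕ :=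
  (D.map fun G => Nat.card (SubgraphIso g G)).sum

/-- A subgraph isomorphism `f` of `g` into `G` is extendable w.r.t.
`ρ : g → g'` if it lifts along `ρ` to a subgraph isomorphism of `g'` into `G`. -/
def IsExtendable {L : Type} {g g' G : LabeledGraph L}
    (ρ : SubgraphIso g g') (f : SubgraphIso g G) : Prop :=
  ∃ f' : SubgraphIso g' G, ∀ v, f.toFun v = f'.toFun (ρ.toFun v)

/-- The extended occurrence `L(g, g', D)`: the total number of extendable
subgraph isomorphisms of `g` into the graphs of `D`, w.r.t. the one-edge
extension `g' = g ⋄ e`. -/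
noncomputable def extendedOccurrence {L : Type} {g g' : LabeledGraph L}
    (ext : OneEdgeExtension g g') (D : List (LabeledGraph L)) : ℕ :=
  (D.map fun G => Nat.card {f : SubgraphIso g G // IsExtendable ext.ρ f}).sum

/-- `g` and its one-edge extension `g'` have equivalent occurrence in `D`. -/
def equivOccurrence {L : Type} {g g' : LabeledGraph L}
    (ext : OneEdgeExtension g g') (D : List (LabeledGraph L)) : Prop :=
  occurrence g D = extendedOccurrence ext D

/-- The support of `g` in `D`: the number of graphs of `D` admitting at least
one subgraph isomorphism from `g`. -/
noncomputable def support {L : Type} (g : LabeledGraph L) (D : List (LabeledGraph L)) : ℕ :=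
  Nat.card {i : Fin D.length // Nonempty (SubgraphIso g (D.get i))}

/-- `g` is frequent in `D` w.r.t. the threshold `min_sup`. -/
def Frequent {L : Type} (D : List (LabeledGraph L)) (min_sup : ℕ)
    (g : LabeledGraph L) : Prop :=
  min_sup ≤ support g D

/-- A frequent graph `g` is closed in `D` if no one-edge extension of `g` has
equivalent occurrence with `g`. -/
def Closed {L : Type} (D : List (LabeledGraph L)) (min_sup : ℕ)
    (g : LabeledGraph L) : Prop :=
  Frequent D min_sup g ∧
    ∀ (g' : LabeledGraph L) (ext : OneEdgeExtension g g'), ¬ equivOccurrence ext D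

/-- The composite inclusion subgraph isomorphism along a chain of one-edge
extensions. -/
def chainComp {L : Type} {gs : ℕ → LabeledGraph L} {n : ℕ}
    (ext : ∀ i, i < n → OneEdgeExtension (gs i) (gs (i + 1))) :
    ∀ i, i ≤ n → SubgraphIso (gs 0) (gs i)
  | 0, _ => SubgraphIso.refl _
  | i + 1, h => (chainComp ext i (Nat.le_of_succ_le h)).comp (ext i h).ρ

/-- The number of edges of a labeled graph. -/
noncomputable def edgeCount {L : Type} (g : LabeledGraph L) : ℕ :=
  Nat.card g.graph.edgeSet

/-- `max_{G ∈ D} |E(G)|`. -/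
noncomputable def maxEdgeCount {L : Type} (D : List (LabeledGraph L)) : ℕ :=
  (D.map edgeCount).foldr max 0

instance subgraphIsoFinite {L : Type} (g G : LabeledGraph L) : Finite (SubgraphIso g G) := by
  haveI := g.fintypeV; haveI := G.fintypeV
  apply Finite.of_injective (fun f : SubgraphIso g G => f.toFun)
  intro a b h
  cases a; cases b; simpa using h

lemma sum_le_pointwise_eq {α : Type*} (f h : α → ℕ) :
    ∀ D : List α, (∀ a, h a ≤ f a) → (D.map f).sum = (D.map h).sum →
      ∀ a ∈ D, f a = h a := by
  intro D
  induction D with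
  | nil => intro _ _ a ha; simp at ha
  | cons x xs ih =>
    intro hle hsum a ha
    simp only [List.map_cons, List.sum_cons] at hsum
    have hle1 : h x ≤ f x := hle x
    have hle2 : (xs.map h).sum ≤ (xs.map f).sum :=
      List.sum_le_sum (fun b _ => hle b)
    have h1 : f x = h x := by omega
    have h2 : (xs.map f).sum = (xs.map h).sum := by omega
    rw [List.mem_cons] at ha
    rcases ha with rfl | ha
    · exact h1
    · exact ih hle h2 a ha

lemma all_extendable {L : Type} {g g' : LabeledGraph L} (ext : OneEdgeExtension g g')
    (G : LabeledGraph L)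
    (hc : Nat.card (SubgraphIso g G) = Nat.card {f : SubgraphIso g G // IsExtendable ext.ρ f})
    (f : SubgraphIso g G) : IsExtendable ext.ρ f := by
  have hinj : Function.Injective
      (fun p : {f : SubgraphIso g G // IsExtendable ext.ρ f} => (p : SubgraphIso g G)) :=
    Subtype.coe_injective
  have hbij : Function.Bijective
      (fun p : {f : SubgraphIso g G // IsExtendable ext.ρ f} => (p : SubgraphIso g G)) := by
    rw [Nat.bijective_iff_injective_and_card]
    exact ⟨hinj, hc.symm⟩
  obtain ⟨p, hp⟩ := hbij.2 f
  rw [← hp]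
  exact p.2

/-- if `g` and its one-edge extension `g'` have equivalent
occurrence in `D`, then they have the same support in `D`. -/
theorem equivOccurrence_support_eq {L : Type}
    (g g' : LabeledGraph L) (ext : OneEdgeExtension g g')
    (D : List (LabeledGraph L)) (heq : equivOccurrence ext D) :
    support g D = support g' D := by
  have key : ∀ G ∈ D, Nat.card (SubgraphIso g G) =
      Nat.card {f : SubgraphIso g G // IsExtendable ext.ρ f} := by
    apply sum_le_pointwise_eq
      (fun G => Nat.card (SubgraphIso g G))
      (fun G => Nat.card {f : SubgraphIso g G // IsExtendable ext.ρ f}) D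
    · intro G
      exact Nat.card_le_card_of_injective _ Subtype.coe_injective
    · exact heq
  unfold support
  apply Nat.card_congr
  apply Equiv.subtypeEquivRight
  intro i
  constructor
  · rintro ⟨f⟩
    obtain ⟨f', _⟩ := all_extendable ext _ (key _ (List.get_mem D i)) f
    exact ⟨f'⟩
  · rintro ⟨f'⟩
    exact ⟨ext.ρ.comp f'⟩
end

section
/- Let D be a finite database of finite labeled graphs, let min_sup ≥ 1, and let g be a frequent labeled graph in D that is not closed in D. Then there exists a labeled graph g' such that g' is closed in D, g and g' have transitive equivalent occurrence in D via a chain of one-edge extensions of length at least one starting at g, the composite inclusion ρ : g → g' makes g a proper subgraph of g' (g' has strictly more edges than g), the support of g' in D equals the support of g in D, and every subgraph isomorphism f of g into a graph G ∈ D extends to a subgraph isomorphism f'' of g' into G with f(v) = f''(ρ(v)) for every vertex v of g. -/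
section Aux

variable {L : Type}

instance (g : LabeledGraph L) : Fintype g.V := g.fintypeV

theorem SubgraphIso.toFun_injective {g g' : LabeledGraph L} :
    Function.Injective (SubgraphIso.toFun : SubgraphIso g g' → (g.V → g'.V)) := by
  rintro ⟨f, _, _, _, _⟩ ⟨f', _, _, _, _⟩ h
  simpa using h

instance (g g' : LabeledGraph L) : Finite (SubgraphIso g g') :=
  Finite.of_injective _ SubgraphIso.toFun_injective

theorem list_sum_le {α : Type*} (l : List α) (a b : α → ℕ)
    (hle : ∀ x ∈ l, b x ≤ a x) : (l.map b).sum ≤ (l.map a).sum := by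
  induction l with
  | nil => simp
  | cons y t ih =>
    simp only [List.map_cons, List.sum_cons]
    have := hle y (by simp)
    have := ih (fun x hx => hle x (by simp [hx]))
    omega

theorem list_sum_eq_of_le {α : Type*} (l : List α) (a b : α → ℕ)
    (hle : ∀ x ∈ l, b x ≤ a x) (hsum : (l.map a).sum = (l.map b).sum) :
    ∀ x ∈ l, a x = b x := by
  induction l with
  | nil => simp
  | cons y t ih =>
    simp only [List.map_cons, List.sum_cons] at hsum
    have h1 := hle y (by simp)
    have h2 := list_sum_le t a b (fun x hx => hle x (by simp [hx]))
    have hy : a y = b y := by omega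
    have ht : (t.map a).sum = (t.map b).sum := by omega
    intro x hx
    rcases List.mem_cons.mp hx with rfl | hx
    · exact hy
    · exact ih (fun z hz => hle z (by simp [hz])) ht x hx

theorem all_of_card_subtype_eq {α : Type} [Finite α] (p : α → Prop)
    (h : Nat.card α = Nat.card {x // p x}) : ∀ x, p x := by
  by_contra hc
  push_neg at hc
  obtain ⟨x, hx⟩ := hc
  exact absurd h (Nat.ne_of_gt (Finite.card_subtype_lt hx))

/-- From equivalent occurrence, every occurrence is extendable. -/
theorem all_extendable_of_equiv {g g' : LabeledGraph L} (ext : OneEdgeExtension g g')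
    {D : List (LabeledGraph L)} (h : equivOccurrence ext D) :
    ∀ G ∈ D, ∀ f : SubgraphIso g G, IsExtendable ext.ρ f := by
  intro G hG f
  rw [equivOccurrence, occurrence, extendedOccurrence] at h
  have key := list_sum_eq_of_le D (fun H => Nat.card (SubgraphIso g H))
    (fun H => Nat.card {f : SubgraphIso g H // IsExtendable ext.ρ f})
    (fun H _ => Finite.card_subtype_le _) h G hG
  exact all_of_card_subtype_eq _ key f

theorem support_eq_of_all_extendable {g g' : LabeledGraph L} (ρ : SubgraphIso g g')
    (D : List (LabeledGraph L))
    (hext : ∀ G ∈ D, ∀ f : SubgraphIso g G, IsExtendable ρ f) :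
    support g' D = support g D := by
  unfold support
  apply Nat.card_congr
  apply Equiv.subtypeEquivRight
  intro i
  constructor
  · rintro ⟨f'⟩; exact ⟨ρ.comp f'⟩
  · rintro ⟨f⟩
    obtain ⟨f', _⟩ := hext (D.get i) (D.get_mem i) f
    exact ⟨f'⟩

theorem mem_edgeSet_map {g G : LabeledGraph L} (f : SubgraphIso g G)
    (e : Sym2 g.V) (he : e ∈ g.graph.edgeSet) :
    Sym2.map f.toFun e ∈ G.graph.edgeSet := by
  induction e using Sym2.ind with
  | _ u v => exact f.map_adj u v he

theorem edgeCount_le_of_iso {g G : LabeledGraph L} (f : SubgraphIso g G) :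
    edgeCount g ≤ edgeCount G :=
  Nat.card_le_card_of_injective
    (fun e => (⟨Sym2.map f.toFun e.1, mem_edgeSet_map f e.1 e.2⟩ : G.graph.edgeSet))
    (fun e₁ e₂ h => Subtype.ext (Sym2.map.injective f.inj (by simpa using h)))

theorem map_ne_e {g g' : LabeledGraph L} (ext : OneEdgeExtension g g')
    (e : Sym2 g.V) (he : e ∈ g.graph.edgeSet) : Sym2.map ext.ρ.toFun e ≠ ext.e := by
  induction e using Sym2.ind with
  | _ u v => exact ext.e_new u v he

theorem edgeCount_lt_of_ext {g g' : LabeledGraph L} (ext : OneEdgeExtension g g') :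
    edgeCount g < edgeCount g' := by
  have hinj : Function.Injective (fun o : Option g.graph.edgeSet =>
      (Option.casesOn o ⟨ext.e, ext.e_mem⟩
        (fun e => ⟨Sym2.map ext.ρ.toFun e.1, mem_edgeSet_map ext.ρ e.1 e.2⟩)
        : g'.graph.edgeSet)) := by
    rintro (_ | e₁) (_ | e₂) h
    · rfl
    · exact absurd (congrArg Subtype.val h).symm (map_ne_e ext e₂.1 e₂.2)
    · exact absurd (congrArg Subtype.val h) (map_ne_e ext e₁.1 e₁.2)
    · have := Sym2.map.injective ext.ρ.inj (congrArg Subtype.val h)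
      simp [Subtype.ext this]
  have := Nat.card_le_card_of_injective _ hinj
  rw [Finite.card_option] at this
  unfold edgeCount
  omega

theorem edgeCount_le_maxEdgeCount {D : List (LabeledGraph L)} {G : LabeledGraph L}
    (hG : G ∈ D) : edgeCount G ≤ maxEdgeCount D := by
  unfold maxEdgeCount
  induction D with
  | nil => cases hG
  | cons H t ih =>
    simp only [List.map_cons, List.foldr_cons]
    rcases List.mem_cons.mp hG with rfl | h
    · exact le_max_left _ _
    · exact le_trans (ih h) (le_max_right _ _)

theorem exists_iso_of_frequent {D : List (LabeledGraph L)} {min_sup : ℕ}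
    (hmin : 1 ≤ min_sup) {g : LabeledGraph L} (h : Frequent D min_sup g) :
    ∃ G ∈ D, Nonempty (SubgraphIso g G) := by
  have hpos : 0 < support g D := lt_of_lt_of_le hmin h
  rw [support] at hpos
  obtain ⟨⟨i, hi⟩⟩ := (Nat.card_pos_iff.mp hpos).1
  exact ⟨D.get i, D.get_mem i, hi⟩

theorem edgeCount_le_max_of_frequent {D : List (LabeledGraph L)} {min_sup : ℕ}
    (hmin : 1 ≤ min_sup) {g : LabeledGraph L} (h : Frequent D min_sup g) :
    edgeCount g ≤ maxEdgeCount D := by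
  obtain ⟨G, hG, ⟨f⟩⟩ := exists_iso_of_frequent hmin h
  exact le_trans (edgeCount_le_of_iso f) (edgeCount_le_maxEdgeCount hG)

/-- Prepending a graph to a chain. -/
def consChain (g : LabeledGraph L) (gs : ℕ → LabeledGraph L) : ℕ → LabeledGraph L
  | 0 => g
  | i + 1 => gs i

def consExt {g : LabeledGraph L} {gs : ℕ → LabeledGraph L} {n : ℕ}
    (ext0 : OneEdgeExtension g (gs 0))
    (ext : ∀ i, i < n → OneEdgeExtension (gs i) (gs (i + 1))) :
    ∀ i, i < n + 1 → OneEdgeExtension (consChain g gs i) (consChain g gs (i + 1))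
  | 0, _ => ext0
  | i + 1, h => ext i (by omega)

theorem chainComp_cons {g : LabeledGraph L} {gs : ℕ → LabeledGraph L} {n : ℕ}
    (ext0 : OneEdgeExtension g (gs 0))
    (ext : ∀ i, i < n → OneEdgeExtension (gs i) (gs (i + 1))) :
    ∀ (i : ℕ) (h : i ≤ n) (h' : i + 1 ≤ n + 1),
      (chainComp (consExt ext0 ext) (i + 1) h').toFun =
        (chainComp ext i h).toFun ∘ ext0.ρ.toFun
  | 0, _, _ => rfl
  | i + 1, h, h' => by
    have ih := chainComp_cons ext0 ext i (Nat.le_of_succ_le h) (by omega)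
    show (ext i h).ρ.toFun ∘ (chainComp (consExt ext0 ext) (i + 1) (by omega)).toFun = _
    rw [ih]
    rfl

end Aux
theorem main_aux {L : Type} (D : List (LabeledGraph L)) (min_sup : ℕ) (hmin : 1 ≤ min_sup) :
    ∀ (k : ℕ) (g : LabeledGraph L), maxEdgeCount D + 1 - edgeCount g ≤ k →
      Frequent D min_sup g → ¬ Closed D min_sup g →
      ∃ (n : ℕ) (gs : ℕ → LabeledGraph L)
        (ext : ∀ i, i < n → OneEdgeExtension (gs i) (gs (i + 1))),
        1 ≤ n ∧ gs 0 = g ∧ Closed D min_sup (gs n) ∧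
        (∀ i (h : i < n), equivOccurrence (ext i h) D) ∧
        edgeCount (gs 0) < edgeCount (gs n) ∧
        support (gs n) D = support (gs 0) D ∧
        (∀ G ∈ D, ∀ f : SubgraphIso (gs 0) G,
          ∃ f'' : SubgraphIso (gs n) G,
            ∀ v, f.toFun v = f''.toFun ((chainComp ext n le_rfl).toFun v)) := by
  intro k
  induction k with
  | zero =>
    intro g hk hfreq _
    have := edgeCount_le_max_of_frequent hmin hfreq
    exact absurd hk (by omega)
  | succ k ih =>
    intro g hk hfreq hnc
    rw [Closed, not_and] at hnc
    have hnc2 := hnc hfreq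
    push_neg at hnc2
    obtain ⟨g', ext0, heq0⟩ := hnc2
    have hall := all_extendable_of_equiv ext0 heq0
    have hsupp : support g' D = support g D := support_eq_of_all_extendable ext0.ρ D hall
    have hfreq' : Frequent D min_sup g' := by rw [Frequent, hsupp]; exact hfreq
    have hedge : edgeCount g < edgeCount g' := edgeCount_lt_of_ext ext0
    by_cases hc : Closed D min_sup g'
    · refine ⟨1, consChain g (fun _ => g'),
        consExt ext0 (fun i h => absurd h (by omega)), le_rfl, rfl, hc, ?_, hedge, hsupp, ?_⟩
      · intro i h
        cases i with
        | zero => exact heq0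
        | succ m => exact absurd h (by omega)
      · intro G hG f
        obtain ⟨f', hf'⟩ := hall G hG f
        exact ⟨f', fun v => hf' v⟩
    · have hle' : edgeCount g' ≤ maxEdgeCount D := edgeCount_le_max_of_frequent hmin hfreq'
      obtain ⟨n, gs, ext, hn, hgs0, hcl, hequiv, hed, hsup, hextend⟩ :=
        ih g' (by omega) hfreq' hc
      subst hgs0
      refine ⟨n + 1, consChain g gs, consExt ext0 ext, by omega, rfl, hcl, ?_, ?_, ?_, ?_⟩
      · intro i h
        cases i with
        | zero => exact heq0
        | succ m => exact hequiv m (by omega)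
      · exact lt_trans hedge hed
      · exact hsup.trans hsupp
      · intro G hG f
        obtain ⟨f1, hf1⟩ := hall G hG f
        obtain ⟨f'', hf''⟩ := hextend G hG f1
        refine ⟨f'', fun v => ?_⟩
        rw [chainComp_cons ext0 ext n le_rfl le_rfl]
        show f.toFun v = f''.toFun ((chainComp ext n le_rfl).toFun (ext0.ρ.toFun v))
        rw [hf1 v, hf'' (ext0.ρ.toFun v)]
/-- a frequent but not closed graph `g` in `D` has transitive
equivalent occurrence (via a chain of one-edge extensions of length ≥ 1) with
a closed graph `g' = gs n` which properly contains it, has the same support,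
and into which every occurrence of `g` in `D` extends along the composite
inclusion. -/
theorem frequent_not_closed_extends_to_closed {L : Type}
    (D : List (LabeledGraph L)) (min_sup : ℕ) (hmin : 1 ≤ min_sup)
    (g : LabeledGraph L) (hfreq : Frequent D min_sup g)
    (hnotclosed : ¬ Closed D min_sup g) :
    ∃ (n : ℕ) (gs : ℕ → LabeledGraph L)
      (ext : ∀ i, i < n → OneEdgeExtension (gs i) (gs (i + 1))),
      1 ≤ n ∧
      gs 0 = g ∧
      Closed D min_sup (gs n) ∧
      (∀ i (h : i < n), equivOccurrence (ext i h) D) ∧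
      edgeCount (gs 0) < edgeCount (gs n) ∧
      support (gs n) D = support (gs 0) D ∧
      (∀ G ∈ D, ∀ f : SubgraphIso (gs 0) G,
        ∃ f'' : SubgraphIso (gs n) G,
          ∀ v, f.toFun v = f''.toFun ((chainComp ext n le_rfl).toFun v)) := by
  exact main_aux D min_sup hmin (maxEdgeCount D + 1 - edgeCount g) g le_rfl hfreq hnotclosed
end
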